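/- Let I ⊆ k[x_1,…,x_n] be an ideal and ≺ a term order. If v ∈ C_≺(I) then the set {in_v(g) : g ∈ G_≺(I)} is the reduced Gröbner basis of the ideal in_v(I) with respect to ≺, i.e. G_≺(in_v(I)) = {in_v(g)}_{g ∈ G_≺(I)}. -/

import Mathlib

open MvPolynomial

/-- A term order on the monomials of `k[x_1,…,x_n]`, identified with exponent
vectors in `ℕ^n`: a strict total order with `1` smallest and compatible with
multiplication of monomials. -/
structure TermOrder (n : ℕ) : Type where
  lt : (Fin n →₀ ℕ) → (Fin n →₀ ℕ) → Prop
  irrefl : ∀ a, ¬ lt a a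
  trans : ∀ a b c, lt a b → lt b c → lt a c
  total : ∀ a b, a ≠ b → lt a b ∨ lt b a
  zero_lt : ∀ a, a ≠ 0 → lt 0 a
  add_right : ∀ a b c, lt a b → lt (a + c) (b + c)

variable {n : ℕ} {k : Type*} [Field k]

/-- The exponent of the `τ`-largest term of `f` (and `0` if `f = 0`). -/
noncomputable def TermOrder.leadExp (τ : TermOrder n) (f : MvPolynomial (Fin n) k) :
    Fin n →₀ ℕ :=
  letI := Classical.propDecidable (∃ α, α ∈ f.support ∧ ∀ β ∈ f.support, β ≠ α → τ.lt β α)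
  if h : ∃ α, α ∈ f.support ∧ ∀ β ∈ f.support, β ≠ α → τ.lt β α then h.choose else 0

/-- The initial term `in_τ(f)` : the `τ`-largest term of `f` (with coefficient). -/
noncomputable def TermOrder.initialTerm (τ : TermOrder n) (f : MvPolynomial (Fin n) k) :
    MvPolynomial (Fin n) k :=
  monomial (τ.leadExp f) (f.coeff (τ.leadExp f))

/-- The initial ideal `in_τ(I) = ⟨in_τ(f) : f ∈ I \ {0}⟩`. -/
noncomputable def TermOrder.initialIdeal (τ : TermOrder n) (I : Ideal (MvPolynomial (Fin n) k)) :
    Ideal (MvPolynomial (Fin n) k) :=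
  Ideal.span {p | ∃ f ∈ I, f ≠ 0 ∧ p = τ.initialTerm f}

/-- The `ω`-degree `⟨ω,α⟩` of a monomial exponent `α`. -/
noncomputable def wdeg (ω : Fin n → ℝ) (α : Fin n →₀ ℕ) : ℝ := ∑ i, ω i * (α i : ℝ)

/-- The initial form `in_ω(f)`: the sum of the terms of `f` whose exponents
maximize `⟨ω,·⟩`. -/
noncomputable def initialForm (ω : Fin n → ℝ) (f : MvPolynomial (Fin n) k) :
    MvPolynomial (Fin n) k :=
  letI : DecidablePred fun α : Fin n →₀ ℕ => ∀ β ∈ f.support, wdeg ω β ≤ wdeg ω α :=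
    Classical.decPred _
  ∑ α ∈ f.support.filter (fun α => ∀ β ∈ f.support, wdeg ω β ≤ wdeg ω α),
    monomial α (f.coeff α)

/-- The initial ideal `in_ω(I) = ⟨in_ω(f) : f ∈ I⟩`. -/
noncomputable def initialFormIdeal (ω : Fin n → ℝ) (I : Ideal (MvPolynomial (Fin n) k)) :
    Ideal (MvPolynomial (Fin n) k) :=
  Ideal.span {p | ∃ f ∈ I, p = initialForm ω f}

/-- `C_≺(I)`: the closure of `{u : in_u(I) = in_≺(I)}` in `ℝ^n`. -/
noncomputable def Cprec (τ : TermOrder n) (I : Ideal (MvPolynomial (Fin n) k)) :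
    Set (Fin n → ℝ) :=
  closure {u : Fin n → ℝ | initialFormIdeal u I = τ.initialIdeal I}

/-- `C_v(I)`: the closure of the equivalence class `{u : in_u(I) = in_v(I)}`. -/
noncomputable def Cv (I : Ideal (MvPolynomial (Fin n) k)) (v : Fin n → ℝ) :
    Set (Fin n → ℝ) :=
  closure {u : Fin n → ℝ | initialFormIdeal u I = initialFormIdeal v I}

/-- `F` is a face of `C`: either empty or the set of maximizers over `C` of a
linear functional. -/
def IsFaceOf (C F : Set (Fin n → ℝ)) : Prop :=
  F = ∅ ∨ ∃ w : Fin n → ℝ, F = {x ∈ C | ∀ y ∈ C, ∑ i, w i * y i ≤ ∑ i, w i * x i}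

/-- The Gröbner fan of `I`: all nonempty faces of the cones `C_v(I)`, `v ∈ ℝ^n_{>0}`. -/
noncomputable def GroebnerFan (I : Ideal (MvPolynomial (Fin n) k)) :
    Set (Set (Fin n → ℝ)) :=
  {F | F.Nonempty ∧ ∃ v : Fin n → ℝ, (∀ i, 0 < v i) ∧ IsFaceOf (Cv I v) F}

/-- `G` is a (finite) Gröbner basis of `I` w.r.t. `τ`. -/
def IsGroebnerBasis (τ : TermOrder n) (I : Ideal (MvPolynomial (Fin n) k))
    (G : Set (MvPolynomial (Fin n) k)) : Prop :=
  G.Finite ∧ Ideal.span G = I ∧ τ.initialIdeal I = Ideal.span (τ.initialTerm '' G)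

/-- `G` is the reduced Gröbner basis of `I` w.r.t. `τ`. -/
def IsReducedGroebnerBasis (τ : TermOrder n) (I : Ideal (MvPolynomial (Fin n) k))
    (G : Set (MvPolynomial (Fin n) k)) : Prop :=
  IsGroebnerBasis τ I G ∧
  (∀ g ∈ G, g.coeff (τ.leadExp g) = 1) ∧
  (∀ g ∈ G, ∀ α ∈ g.support, α ≠ τ.leadExp g →
    (monomial α 1 : MvPolynomial (Fin n) k) ∉ τ.initialIdeal I) ∧
  (∀ g ∈ G, Ideal.span (τ.initialTerm '' (G \ {g})) ≠ τ.initialIdeal I)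

/-!
For `g` in the reduced Gröbner basis, the `≺`-leading exponent of `g` maximizes the
`v`-weight on the support of `g`: for `u` with `in_u(I) = in_≺(I)` the form `in_u(g)` lies in
the monomial ideal `in_≺(I)`, which contains no non-leading monomial of `g`, and the
inequalities pass to the closure. Hence `in_≺(in_v g) = in_≺(g)`.

The crux is `in_≺(in_v I) = in_≺(I)`. Every homogeneous component of an element of `in_v(I)`
is `in_v(f)` for some `f ∈ I`, and `in_≺(in_v f) ∈ in_≺(I)` by induction on the leading
exponent of `f`: if the leading term of `f` is not of top `v`-weight, cancelling it against a
multiple of some `g` leaves `in_v(f)` unchanged. So the monic set `in_v(G) ⊆ in_v(I)` has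
initial terms generating `in_≺(in_v I)`, hence is a Gröbner basis, and reducedness carries over
because the supports only shrink while the initial terms stay the same.
-/

theorem le_and_sub_mem_support_of_mem_support_monomial_mul {δ β : Fin n →₀ ℕ} {c : k}
    {f : MvPolynomial (Fin n) k} (hβ : β ∈ (monomial δ c * f).support) :
    δ ≤ β ∧ β - δ ∈ f.support := by
  rw [mem_support_iff, coeff_monomial_mul'] at hβ
  split_ifs at hβ with hle
  · exact ⟨hle, mem_support_iff.mpr (right_ne_zero_of_mul hβ)⟩
  · exact absurd rfl hβ

namespace TermOrder

variable (τ : TermOrder n)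

theorem asymm {a b : Fin n →₀ ℕ} (h : τ.lt a b) : ¬ τ.lt b a :=
  fun h' => τ.irrefl a (τ.trans a b a h h')

theorem lt_of_le_of_ne {a b : Fin n →₀ ℕ} (hab : a ≤ b) (hne : a ≠ b) : τ.lt a b := by
  obtain ⟨c, rfl⟩ := le_iff_exists_add.mp hab
  have hc : c ≠ 0 := by rintro rfl; simp at hne
  simpa [add_comm] using τ.add_right 0 c a (τ.zero_lt c hc)

theorem add_left {a b : Fin n →₀ ℕ} (c : Fin n →₀ ℕ) (h : τ.lt a b) : τ.lt (c + a) (c + b) := by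
  simpa only [add_comm c] using τ.add_right a b c h

theorem wellFounded : WellFounded τ.lt := by
  have : IsStrictOrder _ τ.lt := { irrefl := τ.irrefl, trans := τ.trans }
  rw [RelEmbedding.wellFounded_iff_isEmpty]
  refine ⟨fun f => ?_⟩
  -- Dickson's lemma: some term of a descending chain divides a later one
  obtain ⟨i, j, hij, hle⟩ := wellQuasiOrdered_le (α := Fin n →₀ ℕ) f
  have hlt : τ.lt (f j) (f i) := f.map_rel_iff.mpr hij
  exact τ.asymm hlt (τ.lt_of_le_of_ne hle fun h => τ.irrefl _ (h ▸ hlt))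

theorem exists_forall_lt (s : Finset (Fin n →₀ ℕ)) (hs : s.Nonempty) :
    ∃ a ∈ s, ∀ b ∈ s, b ≠ a → τ.lt b a := by
  have : IsTrans s (fun x y => τ.lt y x) := ⟨fun a b c h h' => τ.trans _ _ _ h' h⟩
  have : Std.Irrefl (fun x y : s => τ.lt y x) := ⟨fun a => τ.irrefl a⟩
  obtain ⟨⟨a, ha⟩, -, hmax⟩ := (Finite.wellFounded_of_trans_of_irrefl
    (fun x y : s => τ.lt y x)).has_min Set.univ ⟨⟨_, hs.choose_spec⟩, trivial⟩
  exact ⟨a, ha, fun b hb hne => (τ.total b a hne).resolve_right (hmax ⟨b, hb⟩ trivial)⟩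

variable {τ} {f p : MvPolynomial (Fin n) k} {α β : Fin n →₀ ℕ}

theorem leadExp_spec (hf : f ≠ 0) :
    τ.leadExp f ∈ f.support ∧ ∀ β ∈ f.support, β ≠ τ.leadExp f → τ.lt β (τ.leadExp f) := by
  have h := τ.exists_forall_lt f.support (support_nonempty.mpr hf)
  unfold leadExp
  rw [dif_pos h]
  exact h.choose_spec

theorem leadExp_mem_support (hf : f ≠ 0) : τ.leadExp f ∈ f.support :=
  (leadExp_spec hf).1

theorem coeff_leadExp_ne_zero (hf : f ≠ 0) : f.coeff (τ.leadExp f) ≠ 0 :=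
  mem_support_iff.mp (leadExp_mem_support hf)

theorem lt_leadExp (hβ : β ∈ f.support) (hne : β ≠ τ.leadExp f) : τ.lt β (τ.leadExp f) :=
  (leadExp_spec (support_nonempty.mp ⟨_, hβ⟩)).2 β hβ hne

theorem leadExp_eq_of_forall_lt (hα : α ∈ f.support) (h : ∀ β ∈ f.support, β ≠ α → τ.lt β α) :
    τ.leadExp f = α := by
  by_contra hne
  exact τ.asymm (h _ (leadExp_mem_support (support_nonempty.mp ⟨_, hα⟩)) hne)
    (lt_leadExp hα (Ne.symm hne))

theorem leadExp_eq_of_support_subset (hsub : p.support ⊆ f.support)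
    (hmem : τ.leadExp f ∈ p.support) : τ.leadExp p = τ.leadExp f :=
  leadExp_eq_of_forall_lt hmem fun _ hβ hne => lt_leadExp (hsub hβ) hne

theorem initialTerm_eq_of_support_subset (hsub : p.support ⊆ f.support)
    (hmem : τ.leadExp f ∈ p.support) (hcoeff : p.coeff (τ.leadExp f) = f.coeff (τ.leadExp f)) :
    τ.initialTerm p = τ.initialTerm f := by
  rw [initialTerm, initialTerm, leadExp_eq_of_support_subset hsub hmem, hcoeff]

theorem initialTerm_mem_initialIdeal {J : Ideal (MvPolynomial (Fin n) k)} (hf : f ∈ J)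
    (hf0 : f ≠ 0) : τ.initialTerm f ∈ τ.initialIdeal J :=
  Ideal.subset_span ⟨f, hf, hf0, rfl⟩

theorem leadExp_monomial_mul (δ : Fin n →₀ ℕ) {c : k} (hc : c ≠ 0) {g : MvPolynomial (Fin n) k}
    (hg : g ≠ 0) : τ.leadExp (monomial δ c * g) = δ + τ.leadExp g := by
  refine leadExp_eq_of_forall_lt ?_ fun β hβ hne => ?_
  · rw [mem_support_iff, coeff_monomial_mul]
    exact mul_ne_zero hc (coeff_leadExp_ne_zero hg)
  · obtain ⟨hδβ, hβg⟩ := le_and_sub_mem_support_of_mem_support_monomial_mul hβ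
    rw [← add_tsub_cancel_of_le hδβ] at hne ⊢
    exact τ.add_left δ (lt_leadExp hβg fun h => hne (by rw [h]))

theorem lt_leadExp_of_mem_support_sub (hlead : τ.leadExp p = τ.leadExp f)
    (hcoeff : p.coeff (τ.leadExp f) = f.coeff (τ.leadExp f))
    (hβ : β ∈ (f - p).support) : τ.lt β (τ.leadExp f) := by
  classical
  have hne : β ≠ τ.leadExp f := by
    rintro rfl
    simp [hcoeff] at hβ
  rcases Finset.mem_union.mp (support_sub _ f p hβ) with h | h
  · exact lt_leadExp h hne
  · exact hlead ▸ lt_leadExp h (hlead ▸ hne)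

variable (τ) in
noncomputable def reduceBy (f g : MvPolynomial (Fin n) k) : MvPolynomial (Fin n) k :=
  f - monomial (τ.leadExp f - τ.leadExp g) (f.coeff (τ.leadExp f)) * g

theorem reduceBy_mem {J : Ideal (MvPolynomial (Fin n) k)} {f g : MvPolynomial (Fin n) k}
    (hf : f ∈ J) (hg : g ∈ J) : τ.reduceBy f g ∈ J :=
  J.sub_mem hf (J.mul_mem_left _ hg)

theorem leadExp_reduceBy_lt {f g : MvPolynomial (Fin n) k} (hf : f ≠ 0)
    (hg : g.coeff (τ.leadExp g) = 1) (hgf : τ.leadExp g ≤ τ.leadExp f) (hr : τ.reduceBy f g ≠ 0) :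
    τ.lt (τ.leadExp (τ.reduceBy f g)) (τ.leadExp f) := by
  have hg0 : g ≠ 0 := by rintro rfl; simp at hg
  have hδ : τ.leadExp f - τ.leadExp g + τ.leadExp g = τ.leadExp f := tsub_add_cancel_of_le hgf
  refine lt_leadExp_of_mem_support_sub ?_ ?_ (leadExp_mem_support hr)
  · rw [leadExp_monomial_mul _ (coeff_leadExp_ne_zero hf) hg0, hδ]
  · simpa [hδ, hg] using
      coeff_monomial_mul (τ.leadExp g) (τ.leadExp f - τ.leadExp g) (f.coeff (τ.leadExp f)) g

end TermOrder

section InitialForm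

variable {v : Fin n → ℝ} {f p : MvPolynomial (Fin n) k} {α β : Fin n →₀ ℕ} {D : ℝ}

theorem wdeg_eq_weight (ω : Fin n → ℝ) : wdeg ω = Finsupp.weight ω := by
  ext α
  simp [wdeg, Finsupp.weight_apply, Finsupp.sum_fintype, mul_comm]

theorem wdeg_add (ω : Fin n → ℝ) (a b : Fin n →₀ ℕ) : wdeg ω (a + b) = wdeg ω a + wdeg ω b := by
  rw [wdeg_eq_weight, map_add]

theorem continuous_wdeg (α : Fin n →₀ ℕ) : Continuous fun ω : Fin n → ℝ => wdeg ω α := by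
  unfold wdeg
  fun_prop

theorem wdeg_le_of_mem_support_monomial_mul {δ : Fin n →₀ ℕ} {c : k}
    (hβ : β ∈ (monomial δ c * f).support) (hf : ∀ α ∈ f.support, wdeg v α ≤ D) :
    wdeg v β ≤ wdeg v δ + D := by
  obtain ⟨hδβ, hβf⟩ := le_and_sub_mem_support_of_mem_support_monomial_mul hβ
  rw [← add_tsub_cancel_of_le hδβ, wdeg_add]
  linarith [hf _ hβf]

theorem coeff_weightedHomogeneousComponent_wdeg (v : Fin n → ℝ) (D : ℝ)
    (f : MvPolynomial (Fin n) k) (α : Fin n →₀ ℕ) :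
    (weightedHomogeneousComponent v D f).coeff α = if wdeg v α = D then f.coeff α else 0 := by
  classical
  rw [coeff_weightedHomogeneousComponent, wdeg_eq_weight]

theorem mem_support_weightedHomogeneousComponent :
    α ∈ (weightedHomogeneousComponent v D f).support ↔ α ∈ f.support ∧ wdeg v α = D := by
  classical
  rw [support_weightedHomogeneousComponent, Finset.mem_filter, wdeg_eq_weight]

theorem weightedHomogeneousComponent_wdeg_ne_zero (hα : α ∈ f.support) :
    weightedHomogeneousComponent v (wdeg v α) f ≠ 0 :=
  support_nonempty.mp ⟨α, mem_support_weightedHomogeneousComponent.mpr ⟨hα, rfl⟩⟩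

theorem weightedHomogeneousComponent_monomial_mul (δ : Fin n →₀ ℕ) (c : k) :
    weightedHomogeneousComponent v D (monomial δ c * f) =
      monomial δ c * weightedHomogeneousComponent v (D - wdeg v δ) f := by
  ext γ
  rw [coeff_weightedHomogeneousComponent_wdeg, coeff_monomial_mul', coeff_monomial_mul',
    coeff_weightedHomogeneousComponent_wdeg]
  by_cases hδγ : δ ≤ γ
  · have hw : wdeg v γ = D ↔ wdeg v (γ - δ) = D - wdeg v δ := by
      rw [← add_tsub_cancel_of_le hδγ, wdeg_add, add_tsub_cancel_left]
      constructor <;> intro <;> linarith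
    simp only [if_pos hδγ, hw]
    split_ifs <;> simp
  · simp [hδγ]

theorem coeff_initialForm (v : Fin n → ℝ) (f : MvPolynomial (Fin n) k) (α : Fin n →₀ ℕ) :
    (initialForm v f).coeff α =
      if ∀ β ∈ f.support, wdeg v β ≤ wdeg v α then f.coeff α else 0 := by
  classical
  unfold initialForm
  rw [Finset.filter_congr_decidable, coeff_sum]
  simp only [coeff_monomial, Finset.sum_ite_eq', Finset.mem_filter]
  by_cases hα : α ∈ f.support
  · simp only [hα, true_and]
  · simp only [hα, false_and, notMem_support_iff.mp hα, ite_self]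

theorem mem_support_initialForm :
    α ∈ (initialForm v f).support ↔ α ∈ f.support ∧ ∀ β ∈ f.support, wdeg v β ≤ wdeg v α := by
  rw [mem_support_iff (p := initialForm v f), coeff_initialForm]
  by_cases h : ∀ β ∈ f.support, wdeg v β ≤ wdeg v α
  · rw [if_pos h, mem_support_iff]
    exact ⟨fun h' => ⟨h', h⟩, And.left⟩
  · rw [if_neg h]
    exact ⟨fun h' => absurd rfl h', fun h' => absurd h'.2 h⟩

theorem support_initialForm_subset (v : Fin n → ℝ) (f : MvPolynomial (Fin n) k) :
    (initialForm v f).support ⊆ f.support :=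
  fun _ hα => (mem_support_initialForm.mp hα).1

@[simp]
theorem initialForm_zero (v : Fin n → ℝ) : initialForm v (0 : MvPolynomial (Fin n) k) = 0 := by
  simp [initialForm]

theorem initialForm_ne_zero (hf : f ≠ 0) : initialForm v f ≠ 0 := by
  obtain ⟨α, hα, hmax⟩ := f.support.exists_max_image (wdeg v) (support_nonempty.mpr hf)
  exact support_nonempty.mp ⟨α, mem_support_initialForm.mpr ⟨hα, hmax⟩⟩

theorem initialForm_eq_weightedHomogeneousComponent (hle : ∀ β ∈ f.support, wdeg v β ≤ D)
    (hne : weightedHomogeneousComponent v D f ≠ 0) :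
    initialForm v f = weightedHomogeneousComponent v D f := by
  obtain ⟨α, hα⟩ := support_nonempty.mpr hne
  obtain ⟨hαf, hαD⟩ := mem_support_weightedHomogeneousComponent.mp hα
  ext γ
  rw [coeff_initialForm, coeff_weightedHomogeneousComponent_wdeg]
  by_cases hγ : γ ∈ f.support
  · refine if_congr ⟨fun h => le_antisymm (hle γ hγ) (hαD ▸ h α hαf), fun h β hβ => h ▸ hle β hβ⟩
      rfl rfl
  · simp [notMem_support_iff.mp hγ]

theorem initialForm_sub_of_wdeg_lt (hα : α ∈ f.support)
    (hp : ∀ β ∈ p.support, wdeg v β < wdeg v α) : initialForm v (f - p) = initialForm v f := by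
  classical
  obtain ⟨γ, hγ, hmax⟩ := f.support.exists_max_image (wdeg v) ⟨α, hα⟩
  have hpγ : weightedHomogeneousComponent v (wdeg v γ) p = 0 :=
    weightedHomogeneousComponent_eq_zero' _ _ fun β hβ => by
      rw [← wdeg_eq_weight]
      exact ((hp β hβ).trans_le (hmax α hα)).ne
  have hcomp : weightedHomogeneousComponent v (wdeg v γ) (f - p) =
      weightedHomogeneousComponent v (wdeg v γ) f := by
    rw [map_sub, hpγ, sub_zero]
  have hfγ := weightedHomogeneousComponent_wdeg_ne_zero (v := v) hγ
  rw [initialForm_eq_weightedHomogeneousComponent hmax hfγ,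
    initialForm_eq_weightedHomogeneousComponent (fun β hβ => ?_) (hcomp ▸ hfγ), hcomp]
  rcases Finset.mem_union.mp (support_sub _ f p hβ) with h | h
  · exact hmax β h
  · exact ((hp β h).trans_le (hmax α hα)).le

namespace TermOrder

variable {τ : TermOrder n}

theorem leadExp_initialForm (h : ∀ α ∈ f.support, wdeg v α ≤ wdeg v (τ.leadExp f)) :
    τ.leadExp (initialForm v f) = τ.leadExp f := by
  rcases eq_or_ne f 0 with rfl | hf
  · rw [initialForm_zero]
  exact leadExp_eq_of_support_subset (support_initialForm_subset v f)
    (mem_support_initialForm.mpr ⟨leadExp_mem_support hf, h⟩)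

theorem coeff_leadExp_initialForm (h : ∀ α ∈ f.support, wdeg v α ≤ wdeg v (τ.leadExp f)) :
    (initialForm v f).coeff (τ.leadExp (initialForm v f)) = f.coeff (τ.leadExp f) := by
  rw [leadExp_initialForm h, coeff_initialForm, if_pos h]

theorem initialTerm_initialForm (h : ∀ α ∈ f.support, wdeg v α ≤ wdeg v (τ.leadExp f)) :
    τ.initialTerm (initialForm v f) = τ.initialTerm f := by
  rw [initialTerm, initialTerm, coeff_leadExp_initialForm h, leadExp_initialForm h]

end TermOrder

end InitialForm

section ComponentsLift

variable {v : Fin n → ℝ} {I : Ideal (MvPolynomial (Fin n) k)} {x y : MvPolynomial (Fin n) k}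

def ComponentsLift (v : Fin n → ℝ) (I : Ideal (MvPolynomial (Fin n) k))
    (x : MvPolynomial (Fin n) k) : Prop :=
  ∀ D : ℝ, ∃ f ∈ I, (∀ β ∈ f.support, wdeg v β ≤ D) ∧
    weightedHomogeneousComponent v D x = weightedHomogeneousComponent v D f

theorem componentsLift_zero : ComponentsLift v I 0 :=
  fun _ => ⟨0, I.zero_mem, by simp⟩

theorem ComponentsLift.add (hx : ComponentsLift v I x) (hy : ComponentsLift v I y) :
    ComponentsLift v I (x + y) := by
  classical
  intro D
  obtain ⟨f, hf, hfD, hxf⟩ := hx D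
  obtain ⟨g, hg, hgD, hyg⟩ := hy D
  refine ⟨f + g, I.add_mem hf hg, fun β hβ => ?_, by rw [map_add, map_add, hxf, hyg]⟩
  rcases Finset.mem_union.mp (support_add hβ) with h | h
  exacts [hfD β h, hgD β h]

theorem ComponentsLift.monomial_mul (hx : ComponentsLift v I x) (δ : Fin n →₀ ℕ) (c : k) :
    ComponentsLift v I (monomial δ c * x) := by
  intro D
  obtain ⟨f, hf, hfD, hxf⟩ := hx (D - wdeg v δ)
  refine ⟨monomial δ c * f, I.mul_mem_left _ hf, fun β hβ => ?_, ?_⟩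
  · linarith [wdeg_le_of_mem_support_monomial_mul hβ hfD]
  · rw [weightedHomogeneousComponent_monomial_mul, weightedHomogeneousComponent_monomial_mul, hxf]

theorem ComponentsLift.mul_left (hx : ComponentsLift v I x) (a : MvPolynomial (Fin n) k) :
    ComponentsLift v I (a * x) := by
  induction a using MvPolynomial.induction_on' with
  | monomial δ c => exact hx.monomial_mul δ c
  | add a b ha hb => rw [add_mul]; exact ha.add hb

theorem componentsLift_initialForm {f : MvPolynomial (Fin n) k} (hf : f ∈ I) :
    ComponentsLift v I (initialForm v f) := by
  classical
  rcases eq_or_ne f 0 with rfl | hf0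
  · rw [initialForm_zero]
    exact componentsLift_zero
  obtain ⟨α, hα, hmax⟩ := f.support.exists_max_image (wdeg v) (support_nonempty.mpr hf0)
  rw [initialForm_eq_weightedHomogeneousComponent hmax
    (weightedHomogeneousComponent_wdeg_ne_zero hα)]
  intro D
  rw [weightedHomogeneousComponent_of_mem (weightedHomogeneousComponent_mem _ _ _)]
  split_ifs with hD
  · exact ⟨f, hf, hD ▸ hmax, hD ▸ rfl⟩
  · exact ⟨0, I.zero_mem, by simp⟩

theorem componentsLift_of_mem_initialFormIdeal (hx : x ∈ initialFormIdeal v I) :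
    ComponentsLift v I x := by
  induction hx using Submodule.span_induction with
  | mem _ h => obtain ⟨f, hf, rfl⟩ := h; exact componentsLift_initialForm hf
  | zero => exact componentsLift_zero
  | add _ _ _ _ hx hy => exact hx.add hy
  | smul a _ _ hx => exact hx.mul_left a

theorem exists_initialForm_eq_weightedHomogeneousComponent (hx : x ∈ initialFormIdeal v I)
    {D : ℝ} (hne : weightedHomogeneousComponent v D x ≠ 0) :
    ∃ f ∈ I, initialForm v f = weightedHomogeneousComponent v D x := by
  obtain ⟨f, hf, hfD, hxf⟩ := componentsLift_of_mem_initialFormIdeal hx D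
  exact ⟨f, hf, hxf ▸ initialForm_eq_weightedHomogeneousComponent hfD (hxf ▸ hne)⟩

end ComponentsLift

namespace TermOrder

variable {τ : TermOrder n} {G : Set (MvPolynomial (Fin n) k)}

theorem initialTerm_weightedHomogeneousComponent_wdeg_leadExp (v : Fin n → ℝ)
    {x : MvPolynomial (Fin n) k} (hx : x ≠ 0) :
    τ.initialTerm (weightedHomogeneousComponent v (wdeg v (τ.leadExp x)) x) = τ.initialTerm x :=
  initialTerm_eq_of_support_subset (fun _ hα => (mem_support_weightedHomogeneousComponent.mp hα).1)
    (mem_support_weightedHomogeneousComponent.mpr ⟨leadExp_mem_support hx, rfl⟩)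
    (by rw [coeff_weightedHomogeneousComponent_wdeg, if_pos rfl])

theorem mem_span_initialTerm_iff (hG : ∀ g ∈ G, g.coeff (τ.leadExp g) = 1)
    {p : MvPolynomial (Fin n) k} :
    p ∈ Ideal.span (τ.initialTerm '' G) ↔ ∀ α ∈ p.support, ∃ g ∈ G, τ.leadExp g ≤ α := by
  have hG' : τ.initialTerm '' G = (fun α => monomial α (1 : k)) '' (τ.leadExp '' G) := by
    rw [Set.image_image]
    exact Set.image_congr fun g hg => by rw [initialTerm, hG g hg]
  simp [hG', mem_ideal_span_monomial_image]

theorem monomial_mem_span_initialTerm_iff (hG : ∀ g ∈ G, g.coeff (τ.leadExp g) = 1)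
    {α : Fin n →₀ ℕ} {c : k} (hc : c ≠ 0) :
    monomial α c ∈ Ideal.span (τ.initialTerm '' G) ↔ ∃ g ∈ G, τ.leadExp g ≤ α := by
  classical
  simp [mem_span_initialTerm_iff hG, support_monomial, hc]

theorem span_eq_of_initialIdeal_le {J : Ideal (MvPolynomial (Fin n) k)} (hGJ : G ⊆ J)
    (hG : ∀ g ∈ G, g.coeff (τ.leadExp g) = 1)
    (hin : τ.initialIdeal J ≤ Ideal.span (τ.initialTerm '' G)) : Ideal.span G = J := by
  refine le_antisymm (Ideal.span_le.mpr hGJ) fun f hf => ?_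
  induction f using (InvImage.wf τ.leadExp τ.wellFounded).induction with
  | _ f ih =>
  rcases eq_or_ne f 0 with rfl | hf0
  · exact Ideal.zero_mem _
  obtain ⟨g, hg, hgf⟩ := (monomial_mem_span_initialTerm_iff hG (coeff_leadExp_ne_zero hf0)).mp
    (hin (initialTerm_mem_initialIdeal hf hf0))
  have hred : τ.reduceBy f g ∈ Ideal.span G := by
    rcases eq_or_ne (τ.reduceBy f g) 0 with h | h
    · rw [h]; exact Ideal.zero_mem _
    exact ih _ (leadExp_reduceBy_lt hf0 (hG g hg) hgf h) (reduceBy_mem hf (hGJ hg))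
  have hf_eq : f = τ.reduceBy f g +
      monomial (τ.leadExp f - τ.leadExp g) (f.coeff (τ.leadExp f)) * g :=
    (sub_add_cancel _ _).symm
  rw [hf_eq]
  exact Ideal.add_mem _ hred (Ideal.mul_mem_left _ _ (Ideal.subset_span hg))

end TermOrder

namespace IsReducedGroebnerBasis

variable {τ : TermOrder n} {I : Ideal (MvPolynomial (Fin n) k)} {G : Set (MvPolynomial (Fin n) k)}
  {g : MvPolynomial (Fin n) k} {v : Fin n → ℝ}

theorem mem (hG : IsReducedGroebnerBasis τ I G) (hg : g ∈ G) : g ∈ I :=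
  hG.1.2.1 ▸ Ideal.subset_span hg

theorem ne_zero (hG : IsReducedGroebnerBasis τ I G) (hg : g ∈ G) : g ≠ 0 := by
  rintro rfl
  simpa using hG.2.1 0 hg

theorem mem_initialIdeal_iff (hG : IsReducedGroebnerBasis τ I G) {p : MvPolynomial (Fin n) k} :
    p ∈ τ.initialIdeal I ↔ ∀ α ∈ p.support, ∃ g ∈ G, τ.leadExp g ≤ α := by
  rw [hG.1.2.2, TermOrder.mem_span_initialTerm_iff hG.2.1]

theorem monomial_mem_initialIdeal_iff (hG : IsReducedGroebnerBasis τ I G) {α : Fin n →₀ ℕ}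
    {c : k} (hc : c ≠ 0) : monomial α c ∈ τ.initialIdeal I ↔ ∃ g ∈ G, τ.leadExp g ≤ α := by
  rw [hG.1.2.2, TermOrder.monomial_mem_span_initialTerm_iff hG.2.1 hc]

theorem wdeg_le_wdeg_leadExp_of_initialFormIdeal_eq (hG : IsReducedGroebnerBasis τ I G)
    (hv : initialFormIdeal v I = τ.initialIdeal I) (hg : g ∈ G) {α : Fin n →₀ ℕ}
    (hα : α ∈ g.support) : wdeg v α ≤ wdeg v (τ.leadExp g) := by
  obtain ⟨β, hβ, hmax⟩ := g.support.exists_max_image (wdeg v) ⟨α, hα⟩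
  -- `in_v g` lies in the monomial ideal `in_≺(I)`, which contains no non-leading monomial of `g`
  have hβI : monomial β (1 : k) ∈ τ.initialIdeal I := by
    rw [hG.monomial_mem_initialIdeal_iff one_ne_zero]
    exact hG.mem_initialIdeal_iff.mp (hv ▸ Ideal.subset_span ⟨g, hG.mem hg, rfl⟩) β
      (mem_support_initialForm.mpr ⟨hβ, hmax⟩)
  have hβg : β = τ.leadExp g := by
    by_contra hne
    exact hG.2.2.1 g hg β hβ hne hβI
  exact hβg ▸ hmax α hα

theorem wdeg_le_wdeg_leadExp (hG : IsReducedGroebnerBasis τ I G) (hv : v ∈ Cprec τ I)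
    (hg : g ∈ G) {α : Fin n →₀ ℕ} (hα : α ∈ g.support) : wdeg v α ≤ wdeg v (τ.leadExp g) :=
  closure_minimal (fun _ hu => hG.wdeg_le_wdeg_leadExp_of_initialFormIdeal_eq hu hg hα)
    (isClosed_le (continuous_wdeg α) (continuous_wdeg _)) hv

theorem initialTerm_initialForm_mem_initialIdeal (hG : IsReducedGroebnerBasis τ I G)
    (hv : v ∈ Cprec τ I) {f : MvPolynomial (Fin n) k} (hf : f ∈ I) (hf0 : f ≠ 0) :
    τ.initialTerm (initialForm v f) ∈ τ.initialIdeal I := by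
  induction f using (InvImage.wf τ.leadExp τ.wellFounded).induction with
  | _ f ih =>
  obtain ⟨g, hg, hgf⟩ := (hG.monomial_mem_initialIdeal_iff (τ.coeff_leadExp_ne_zero hf0)).mp
    (τ.initialTerm_mem_initialIdeal hf hf0)
  by_cases htop : ∀ α ∈ f.support, wdeg v α ≤ wdeg v (τ.leadExp f)
  · rw [τ.initialTerm_initialForm htop]
    exact τ.initialTerm_mem_initialIdeal hf hf0
  obtain ⟨α, hα, hlt⟩ : ∃ α ∈ f.support, wdeg v (τ.leadExp f) < wdeg v α := by
    simpa using htop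
  -- cancelling the leading term of `f` only changes terms of weight below that of `α`
  have hsame : initialForm v (τ.reduceBy f g) = initialForm v f := by
    refine initialForm_sub_of_wdeg_lt hα fun β hβ => lt_of_le_of_lt ?_ hlt
    have := wdeg_le_of_mem_support_monomial_mul hβ fun _ => hG.wdeg_le_wdeg_leadExp hv hg
    rwa [← wdeg_add, tsub_add_cancel_of_le hgf] at this
  have hred0 : τ.reduceBy f g ≠ 0 := fun h =>
    initialForm_ne_zero hf0 (by rw [← hsame, h, initialForm_zero])
  rw [← hsame]
  exact ih _ (τ.leadExp_reduceBy_lt hf0 (hG.2.1 g hg) hgf hred0)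
    (TermOrder.reduceBy_mem hf (hG.mem hg)) hred0

theorem initialTerm_image_initialForm_image (hG : IsReducedGroebnerBasis τ I G)
    (hv : v ∈ Cprec τ I) {S : Set (MvPolynomial (Fin n) k)} (hS : S ⊆ G) :
    τ.initialTerm '' (initialForm v '' S) = τ.initialTerm '' S := by
  rw [Set.image_image]
  exact Set.image_congr fun g hg =>
    τ.initialTerm_initialForm fun _ => hG.wdeg_le_wdeg_leadExp hv (hS hg)

theorem initialIdeal_initialFormIdeal (hG : IsReducedGroebnerBasis τ I G) (hv : v ∈ Cprec τ I) :
    τ.initialIdeal (initialFormIdeal v I) = τ.initialIdeal I := by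
  apply le_antisymm
  · refine Ideal.span_le.mpr ?_
    rintro _ ⟨x, hx, hx0, rfl⟩
    have hne := weightedHomogeneousComponent_wdeg_ne_zero (v := v) (τ.leadExp_mem_support hx0)
    obtain ⟨f, hf, hfx⟩ := exists_initialForm_eq_weightedHomogeneousComponent hx hne
    have hf0 : f ≠ 0 := by
      rintro rfl
      exact hne (by rw [← hfx, initialForm_zero])
    rw [← τ.initialTerm_weightedHomogeneousComponent_wdeg_leadExp v hx0, ← hfx]
    exact hG.initialTerm_initialForm_mem_initialIdeal hv hf hf0
  · rw [hG.1.2.2]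
    refine Ideal.span_le.mpr ?_
    rintro _ ⟨g, hg, rfl⟩
    rw [← τ.initialTerm_initialForm fun _ => hG.wdeg_le_wdeg_leadExp hv hg]
    exact τ.initialTerm_mem_initialIdeal (Ideal.subset_span ⟨g, hG.mem hg, rfl⟩)
      (initialForm_ne_zero (hG.ne_zero hg))

end IsReducedGroebnerBasis

/-- If `v ∈ C_≺(I)` then `{in_v(g) : g ∈ G_≺(I)}` is the reduced Gröbner basis
of `in_v(I)` with respect to `≺`. -/
theorem initialForm_image_isReducedGroebnerBasis (τ : TermOrder n)
    (I : Ideal (MvPolynomial (Fin n) k)) (v : Fin n → ℝ) (hv : v ∈ Cprec τ I)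
    (G : Set (MvPolynomial (Fin n) k)) (hG : IsReducedGroebnerBasis τ I G) :
    IsReducedGroebnerBasis τ (initialFormIdeal v I) (initialForm v '' G) := by
  have htop : ∀ g ∈ G, ∀ α ∈ g.support, wdeg v α ≤ wdeg v (τ.leadExp g) :=
    fun _ hg _ => hG.wdeg_le_wdeg_leadExp hv hg
  have hin := hG.initialIdeal_initialFormIdeal hv
  have hmonic : ∀ g ∈ initialForm v '' G, g.coeff (τ.leadExp g) = 1 := by
    rintro _ ⟨g, hg, rfl⟩
    rw [τ.coeff_leadExp_initialForm (htop g hg), hG.2.1 g hg]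
  have hbasis : τ.initialIdeal (initialFormIdeal v I) =
      Ideal.span (τ.initialTerm '' (initialForm v '' G)) := by
    rw [hin, hG.initialTerm_image_initialForm_image hv subset_rfl, hG.1.2.2]
  have hsub : initialForm v '' G ⊆ initialFormIdeal v I := by
    rintro _ ⟨g, hg, rfl⟩
    exact Ideal.subset_span ⟨g, hG.mem hg, rfl⟩
  refine ⟨⟨hG.1.1.image _, τ.span_eq_of_initialIdeal_le hsub hmonic hbasis.le, hbasis⟩, hmonic,
    ?_, ?_⟩
  · rintro _ ⟨g, hg, rfl⟩ α hα hne
    rw [hin]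
    exact hG.2.2.1 g hg α (support_initialForm_subset v g hα)
      (τ.leadExp_initialForm (htop g hg) ▸ hne)
  · rintro _ ⟨g, hg, rfl⟩ heq
    apply hG.2.2.2 g hg
    refine le_antisymm (hG.1.2.2 ▸ Ideal.span_mono (Set.image_mono Set.sdiff_subset)) ?_
    rw [← hin, ← heq, ← hG.initialTerm_image_initialForm_image hv Set.sdiff_subset]
    refine Ideal.span_mono (Set.image_mono ?_)
    rintro _ ⟨⟨g', hg', rfl⟩, hne⟩
    exact ⟨g', ⟨hg', fun h => hne (congrArg (initialForm v) h)⟩, rfl⟩
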